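/- arXiv:1012.5401 — 2 statements merged into one kernel-verified Lean document; each statement's English description precedes it below -/
import Mathlib

section
/- For every quadruple ε = (ε₁, ε₂, ε₃, ε₄) with each εᵢ ∈ {+1, −1}, every integer n, and each i ∈ {1, 2, 3}, the reduced word representing Φ_{ε,n}(aᵢ) in F contains exactly one letter from {a_{i+1}, a_{i+1}⁻¹} and contains no letter a_j or a_j⁻¹ with j > i + 1. -/
/-! `F` is the free group on four generators `a₁, a₂, a₃, a₄`;
here `a 0 = a₁`, `a 1 = a₂`, `a 2 = a₃`, `a 3 = a₄`. -/

abbrev F : Type := FreeGroup (Fin 4)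

def a (i : Fin 4) : F := FreeGroup.of i

/-- `Δ i ε` is the endomorphism `Δ_{i+1}^ε` of `F` induced by the `ε`-th power of the
Dehn twist `D_{i+1}` (the index is shifted by one): `Δ 0 ε = Δ₁^ε`, …, `Δ 4 ε = Δ₅^ε`. -/
def Δ : Fin 5 → ℤ → (F →* F) := fun i ε =>
  FreeGroup.lift (![
    ![a 0, a 1 * a 0 ^ ε, a 2, a 3],
    ![a 0 * a 1 ^ (-ε), a 1, a 2, a 3],
    ![a 0, ((a 2)⁻¹ * a 0) ^ ε * a 1, a 2, ((a 2)⁻¹ * a 0) ^ ε * a 3],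
    ![a 0, a 1, a 2 * a 3 ^ ε, a 3],
    ![a 0, a 1, a 2, a 3 * a 2 ^ (-ε)]] i)

lemma Δ_inv_comp (i : Fin 5) (ε : ℤ) :
    (Δ i (-ε)).comp (Δ i ε) = MonoidHom.id F := by
  apply FreeGroup.ext_hom
  intro j
  fin_cases i <;> fin_cases j <;>
    simp [Δ, a, MonoidHom.comp_apply]

/-- `Δ i ε` as an automorphism of `F` (its inverse is `Δ i (-ε)`). -/
def Δaut (i : Fin 5) (ε : ℤ) : F ≃* F where
  toFun := Δ i ε
  invFun := Δ i (-ε)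
  left_inv := fun x => by
    simpa using congrArg (fun f : F →* F => f x) (Δ_inv_comp i ε)
  right_inv := fun x => by
    have h := congrArg (fun f : F →* F => f x) (Δ_inv_comp i (-ε))
    rw [neg_neg] at h
    simpa using h
  map_mul' := map_mul _

/-- The automorphism `Φ_{ε,n} = Δ₂^{ε₂} ∘ Δ₁^{ε₁} ∘ Δ₃^{ε₃} ∘ Δ₄^{ε₄} ∘ (Δ₅^{+1})^n` of `F`
(multiplication of automorphisms is composition). -/
def Φ (ε₁ ε₂ ε₃ ε₄ n : ℤ) : F ≃* F :=
  Δaut 1 ε₂ * Δaut 0 ε₁ * Δaut 2 ε₃ * Δaut 3 ε₄ * (Δaut 4 1) ^ n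

/-! Δ₅ fixes a₁, a₂, a₃, so the factor (Δ₅)ⁿ of Φ drops out on these generators and
Φ(aᵢ), i ≤ 3, is an explicit word in ε₁, …, ε₄ alone. For each
of the finitely many sign choices its reduced word is then computed and inspected. -/

@[simp]
lemma Δaut_apply (i : Fin 5) (ε : ℤ) (x : F) : Δaut i ε x = Δ i ε x := rfl

lemma Δaut_four_zpow_apply_of_lt (n : ℤ) {j : Fin 4} (hj : (j : ℕ) < 3) :
    (Δaut 4 1 ^ n) (a j) = a j := by
  have hfix : Δaut 4 1 ∈ MulAction.stabilizer (MulAut F) (a j) := by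
    fin_cases j <;> first | rfl | simp at hj
  exact (MulAction.stabilizer (MulAut F) (a j)).zpow_mem hfix n

lemma Φ_apply_of_lt (ε₁ ε₂ ε₃ ε₄ n : ℤ) {j : Fin 4} (hj : (j : ℕ) < 3) :
    Φ ε₁ ε₂ ε₃ ε₄ n (a j) = Δaut 1 ε₂ (Δaut 0 ε₁ (Δaut 2 ε₃ (Δaut 3 ε₄ (a j)))) :=
  congrArg (fun x => Δaut 1 ε₂ (Δaut 0 ε₁ (Δaut 2 ε₃ (Δaut 3 ε₄ x))))
    (Δaut_four_zpow_apply_of_lt n hj)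

lemma Φ_apply_a_zero (ε₁ ε₂ ε₃ ε₄ n : ℤ) :
    Φ ε₁ ε₂ ε₃ ε₄ n (a 0) = a 0 * a 1 ^ (-ε₂) := by
  rw [Φ_apply_of_lt _ _ _ _ _ (by decide)]
  simp [Δ, a]

lemma Φ_apply_a_one (ε₁ ε₂ ε₃ ε₄ n : ℤ) :
    Φ ε₁ ε₂ ε₃ ε₄ n (a 1) =
      ((a 2)⁻¹ * a 0 * a 1 ^ (-ε₂)) ^ ε₃ * a 1 * (a 0 * a 1 ^ (-ε₂)) ^ ε₁ := by
  rw [Φ_apply_of_lt _ _ _ _ _ (by decide)]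
  simp [Δ, a, mul_assoc]

lemma Φ_apply_a_two (ε₁ ε₂ ε₃ ε₄ n : ℤ) :
    Φ ε₁ ε₂ ε₃ ε₄ n (a 2) =
      a 2 * (((a 2)⁻¹ * a 0 * a 1 ^ (-ε₂)) ^ ε₃ * a 3) ^ ε₄ := by
  rw [Φ_apply_of_lt _ _ _ _ _ (by decide)]
  simp [Δ, a, mul_assoc]

/-- For `i ∈ {1, 2, 3}` (here `i : Fin 4` with `(i : ℕ) < 3`, so `a i = a_{i+1}` in the
paper's numbering), the reduced word of `Φ_{ε,n}(aᵢ)` contains exactly one letter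
`a_{i+1}^{±1}` and no letter `a_j^{±1}` with `j > i + 1`. -/
theorem phi_reduced_word (ε₁ ε₂ ε₃ ε₄ : ℤ)
    (h₁ : ε₁ = 1 ∨ ε₁ = -1) (h₂ : ε₂ = 1 ∨ ε₂ = -1)
    (h₃ : ε₃ = 1 ∨ ε₃ = -1) (h₄ : ε₄ = 1 ∨ ε₄ = -1) (n : ℤ)
    (i : Fin 4) (hi : (i : ℕ) < 3) :
    ((Φ ε₁ ε₂ ε₃ ε₄ n (a i)).toWord.countP
        (fun l => (l.1 : ℕ) = (i : ℕ) + 1) = 1) ∧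
    ∀ l ∈ (Φ ε₁ ε₂ ε₃ ε₄ n (a i)).toWord, (l.1 : ℕ) ≤ (i : ℕ) + 1 := by
  fin_cases i <;> simp only [Fin.reduceFinMk, Fin.isValue]
  · rw [Φ_apply_a_zero]
    rcases h₂ with rfl | rfl <;> decide
  · rw [Φ_apply_a_one]
    rcases h₁ with rfl | rfl <;> rcases h₂ with rfl | rfl <;> rcases h₃ with rfl | rfl <;> decide
  · rw [Φ_apply_a_two]
    rcases h₂ with rfl | rfl <;> rcases h₃ with rfl | rfl <;> rcases h₄ with rfl | rfl <;> decide
  · simp at hi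
end

section
/- For every quadruple ε = (ε₁, ε₂, ε₃, ε₄) with each εᵢ ∈ {+1, −1} and every integer n, the presented group G_{ε,n} is generated by the images of x₁ and t; that is, the subgroup closure of {x₁, t} in G_{ε,n} is the whole group. In particular the rank (minimal number of generators) of the fundamental group of the genus-two surface bundle M_{ε,n} is at most two. -/
/-- `ρ` rewrites a word in `a₁,…,a₄` as the corresponding word in the first four
generators `x₁,…,x₄` of the free group on five generators `x₁, x₂, x₃, x₄, t`
(here `t` is the fifth generator `(4 : Fin 5)`). -/
def ρ : F →* FreeGroup (Fin 5) := FreeGroup.lift fun j => FreeGroup.of (Fin.castSucc j)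

/-- The relators `t⁻¹·xᵢ·t·(ρ(Φ_{ε,n}(aᵢ)))⁻¹` for `i = 1, 2, 3, 4`. -/
def monodromyRels (ε₁ ε₂ ε₃ ε₄ n : ℤ) : Set (FreeGroup (Fin 5)) :=
  { w | ∃ i : Fin 4,
      w = (FreeGroup.of 4)⁻¹ * FreeGroup.of (Fin.castSucc i) * FreeGroup.of 4 *
        (ρ (Φ ε₁ ε₂ ε₃ ε₄ n (a i)))⁻¹ }

/-- The surface relator `[x₁,x₂]·[x₃,x₄]⁻¹` on the generators `x₁,…,x₄`. -/
def surfaceRel : FreeGroup (Fin 5) :=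
  (FreeGroup.of 0 * FreeGroup.of 1 * (FreeGroup.of 0)⁻¹ * (FreeGroup.of 1)⁻¹) *
    (FreeGroup.of 2 * FreeGroup.of 3 * (FreeGroup.of 2)⁻¹ * (FreeGroup.of 3)⁻¹)⁻¹

/-- `G_{ε,n}`, the fundamental group of the closed genus-two surface bundle
`M_{ε,n}`: generators `x₁, x₂, x₃, x₄, t`, relators `t⁻¹·xᵢ·t·(ρ(Φ_{ε,n}(aᵢ)))⁻¹`
(`i = 1,…,4`) together with `[x₁,x₂]·[x₃,x₄]⁻¹`. -/
def G (ε₁ ε₂ ε₃ ε₄ n : ℤ) : Type :=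
  PresentedGroup (monodromyRels ε₁ ε₂ ε₃ ε₄ n ∪ {surfaceRel})

instance (ε₁ ε₂ ε₃ ε₄ n : ℤ) : Group (G ε₁ ε₂ ε₃ ε₄ n) :=
  inferInstanceAs (Group (PresentedGroup _))

/-! Put `H = ⟨x₁, t⟩`, `b = x₁ x₂^{-ε₂}` and `q = x₃⁻¹ b`. Since `Δ₅` fixes `a₁, a₂, a₃`, the first
three monodromy relators say
`t⁻¹ x₁ t = x₁ x₂^{-ε₂}`, `t⁻¹ x₂ t = q^{ε₃} x₂ b^{ε₁}` and `t⁻¹ x₃ t = x₃ (q^{ε₃} x₄)^{ε₄}`.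
As the exponents `ε₂, ε₃, ε₄` are units of `ℤ`, these can be solved in turn inside `H`:
the first gives `x₂ ∈ H`, the second `q ∈ H` and so `x₃ = b q⁻¹ ∈ H`, the third `x₄ ∈ H`. -/

lemma MulAut.zpow_apply_eq_self_of_apply_eq_self {M : Type*} [Mul M] {φ : MulAut M} {x : M}
    (h : φ x = x) (n : ℤ) : (φ ^ n) x = x := by
  have := Equiv.Perm.zpow_apply_eq_self_of_apply_eq_self (f := MulAut.toPerm M φ) h n
  rwa [← map_zpow] at this

namespace Subgroup

variable {G : Type*} [Group G] {H : Subgroup G} {ε : ℤ}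

lemma zpow_mem_iff_of_isUnit (hε : IsUnit ε) {g : G} : g ^ ε ∈ H ↔ g ∈ H := by
  rcases Int.isUnit_iff.mp hε with rfl | rfl <;> simp

lemma mem_of_conj_eq_mul_zpow (hε : IsUnit ε) {t x y : G} (ht : t ∈ H) (hx : x ∈ H)
    (h : t⁻¹ * x * t = x * y ^ ε) : y ∈ H := by
  have hy : y ^ ε = x⁻¹ * (t⁻¹ * x * t) := by rw [h]; group
  rw [← zpow_mem_iff_of_isUnit hε, hy]
  exact mul_mem (inv_mem hx) (mul_mem (mul_mem (inv_mem ht) hx) ht)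

lemma mem_of_conj_eq_zpow_mul_mul (hε : IsUnit ε) {t x y z : G} (ht : t ∈ H) (hx : x ∈ H)
    (hz : z ∈ H) (h : t⁻¹ * x * t = y ^ ε * x * z) : y ∈ H := by
  have hy : y ^ ε = t⁻¹ * x * t * z⁻¹ * x⁻¹ := by rw [h]; group
  rw [← zpow_mem_iff_of_isUnit hε, hy]
  exact mul_mem (mul_mem (mul_mem (mul_mem (inv_mem ht) hx) ht) (inv_mem hz)) (inv_mem hx)

end Subgroup

section

variable (ε₁ ε₂ ε₃ ε₄ n : ℤ)

lemma Φ_apply_of_Δ_fixed {i : Fin 4} (h : Δ 4 1 (a i) = a i) :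
    Φ ε₁ ε₂ ε₃ ε₄ n (a i) = Δ 1 ε₂ (Δ 0 ε₁ (Δ 2 ε₃ (Δ 3 ε₄ (a i)))) :=
  congrArg (fun w => Δ 1 ε₂ (Δ 0 ε₁ (Δ 2 ε₃ (Δ 3 ε₄ w))))
    (MulAut.zpow_apply_eq_self_of_apply_eq_self (φ := Δaut 4 1) h n)

lemma Φ_apply_a₀ : Φ ε₁ ε₂ ε₃ ε₄ n (a 0) = a 0 * a 1 ^ (-ε₂) := by
  rw [Φ_apply_of_Δ_fixed _ _ _ _ _ (by simp [Δ, a])]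
  simp [Δ, a]

lemma Φ_apply_a₁ : Φ ε₁ ε₂ ε₃ ε₄ n (a 1) =
    ((a 2)⁻¹ * (a 0 * a 1 ^ (-ε₂))) ^ ε₃ * a 1 * (a 0 * a 1 ^ (-ε₂)) ^ ε₁ := by
  rw [Φ_apply_of_Δ_fixed _ _ _ _ _ (by simp [Δ, a])]
  simp [Δ, a, mul_assoc]

lemma Φ_apply_a₂ : Φ ε₁ ε₂ ε₃ ε₄ n (a 2) =
    a 2 * (((a 2)⁻¹ * (a 0 * a 1 ^ (-ε₂))) ^ ε₃ * a 3) ^ ε₄ := by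
  rw [Φ_apply_of_Δ_fixed _ _ _ _ _ (by simp [Δ, a])]
  simp [Δ, a]

namespace G

def ι : F →* G ε₁ ε₂ ε₃ ε₄ n := (PresentedGroup.mk _).comp ρ

def t : G ε₁ ε₂ ε₃ ε₄ n := PresentedGroup.of 4

lemma t_inv_mul_ι_mul_t (w : F) :
    (t ε₁ ε₂ ε₃ ε₄ n)⁻¹ * ι ε₁ ε₂ ε₃ ε₄ n w * t ε₁ ε₂ ε₃ ε₄ n =
      ι ε₁ ε₂ ε₃ ε₄ n (Φ ε₁ ε₂ ε₃ ε₄ n w) := by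
  suffices (MulAut.conj (t ε₁ ε₂ ε₃ ε₄ n)⁻¹).toMonoidHom.comp (ι ε₁ ε₂ ε₃ ε₄ n) =
      (ι ε₁ ε₂ ε₃ ε₄ n).comp (Φ ε₁ ε₂ ε₃ ε₄ n).toMonoidHom by
    simpa using DFunLike.congr_fun this w
  refine FreeGroup.ext_hom _ _ fun i => ?_
  have hrel : PresentedGroup.mk _ ((FreeGroup.of 4)⁻¹ * FreeGroup.of i.castSucc * FreeGroup.of 4) =
      ι ε₁ ε₂ ε₃ ε₄ n (Φ ε₁ ε₂ ε₃ ε₄ n (a i)) :=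
    PresentedGroup.mk_eq_mk_of_mul_inv_mem (Or.inl ⟨i, rfl⟩)
  simp only [map_mul, map_inv] at hrel
  exact hrel

end G

end

theorem G_generated_by_two_general (ε₁ ε₂ ε₃ ε₄ : ℤ)
    (h₂ : ε₂ = 1 ∨ ε₂ = -1)
    (h₃ : ε₃ = 1 ∨ ε₃ = -1) (h₄ : ε₄ = 1 ∨ ε₄ = -1) (n : ℤ) :
    Subgroup.closure
      ({PresentedGroup.of (rels := monodromyRels ε₁ ε₂ ε₃ ε₄ n ∪ {surfaceRel}) 0,
        PresentedGroup.of (rels := monodromyRels ε₁ ε₂ ε₃ ε₄ n ∪ {surfaceRel}) 4} :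
          Set (G ε₁ ε₂ ε₃ ε₄ n)) = ⊤ := by
  set H := Subgroup.closure ({PresentedGroup.of 0, PresentedGroup.of 4} : Set (G ε₁ ε₂ ε₃ ε₄ n))
  set t := G.t ε₁ ε₂ ε₃ ε₄ n
  set x : Fin 4 → G ε₁ ε₂ ε₃ ε₄ n := fun i => G.ι ε₁ ε₂ ε₃ ε₄ n (a i)
  set b := x 0 * x 1 ^ (-ε₂)
  set q := (x 2)⁻¹ * b
  have r₀ : t⁻¹ * x 0 * t = x 0 * x 1 ^ (-ε₂) := by
    simp [t, x, G.t_inv_mul_ι_mul_t, Φ_apply_a₀]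
  have r₁ : t⁻¹ * x 1 * t = q ^ ε₃ * x 1 * b ^ ε₁ := by
    simp [t, x, q, b, G.t_inv_mul_ι_mul_t, Φ_apply_a₁]
  have r₂ : t⁻¹ * x 2 * t = x 2 * (q ^ ε₃ * x 3) ^ ε₄ := by
    simp [t, x, q, b, G.t_inv_mul_ι_mul_t, Φ_apply_a₂]
  have ht : t ∈ H := Subgroup.subset_closure (Or.inr rfl)
  have hx₀ : x 0 ∈ H := Subgroup.subset_closure (Or.inl rfl)
  have hx₁ : x 1 ∈ H :=
    Subgroup.mem_of_conj_eq_mul_zpow (Int.isUnit_iff.mpr h₂).neg ht hx₀ r₀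
  have hb : b ∈ H := mul_mem hx₀ (zpow_mem hx₁ _)
  have hq : q ∈ H :=
    Subgroup.mem_of_conj_eq_zpow_mul_mul (Int.isUnit_iff.mpr h₃) ht hx₁ (zpow_mem hb _) r₁
  have hx₂ : x 2 ∈ H := by simpa [q] using mul_mem hb (inv_mem hq)
  have hx₃ : x 3 ∈ H := (mul_mem_cancel_left (zpow_mem hq _)).mp <|
    Subgroup.mem_of_conj_eq_mul_zpow (Int.isUnit_iff.mpr h₄) ht hx₂ r₂
  refine eq_top_iff.mpr fun g _ => PresentedGroup.generated_by _ H (Fin.lastCases ht fun i => ?_) g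
  fin_cases i
  exacts [hx₀, hx₁, hx₂, hx₃]

/-- `G_{ε,n}` is generated by the images of `x₁` and `t`; in particular the rank of the
fundamental group of the genus-two surface bundle `M_{ε,n}` is at most two. -/
theorem G_generated_by_two (ε₁ ε₂ ε₃ ε₄ : ℤ)
    (h₁ : ε₁ = 1 ∨ ε₁ = -1) (h₂ : ε₂ = 1 ∨ ε₂ = -1)
    (h₃ : ε₃ = 1 ∨ ε₃ = -1) (h₄ : ε₄ = 1 ∨ ε₄ = -1) (n : ℤ) :
    Subgroup.closure
      ({PresentedGroup.of (rels := monodromyRels ε₁ ε₂ ε₃ ε₄ n ∪ {surfaceRel}) 0,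
        PresentedGroup.of (rels := monodromyRels ε₁ ε₂ ε₃ ε₄ n ∪ {surfaceRel}) 4} :
          Set (G ε₁ ε₂ ε₃ ε₄ n)) = ⊤ :=
  G_generated_by_two_general ε₁ ε₂ ε₃ ε₄ h₂ h₃ h₄ n
end
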